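/- arXiv:1405.0666 — 9 statements merged into one kernel-verified Lean document; each statement's English description precedes it below -/
import Mathlib

section
/- Let γ > 1, 0 ≤ b̃ < 1 and 1 < β < (γ+1)/(γ−1+2b̃). Define h₀ = −(1 − b̃β)²(β − 1)²/β, h₁ = (1 − b̃β)²(β − 1)(3 − 1/β) − 2(β − 1)(1 − b̃β)((γ+1−2b̃)β − (γ−1)), h₂ = −((3β − 2)(1 − b̃β)² + (β − 1)((γ+1−2b̃)β − (γ−1))(γ−1+2b̃β)), and h₃ = β(1 − b̃β)². Then h₀ < 0, h₁ < 0, h₂ < 0 and h₃ > 0. -/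
/-! Write `s = 1 - b̃β` and `q = (γ + 1 - 2b̃)β - (γ - 1)`. The bound on `β` gives `s > 0` through
`2s = (γ + 1 - (γ - 1 + 2b̃)β) + (γ - 1)(β - 1)`, and `q = (γ - 1)(β - 1) + 2β(1 - b̃) > 0`.
Then `h₀`, `h₂`, `h₃` are sign-definite term by term, while `h₁ = s(β - 1)(s(3β - 1) - 2βq)/β`
with `2βq - s(3β - 1) = 2β(γ - 1)(β - 1) + (3β - 1)(β - 1) + β(β + 1)(1 - b̃) > 0`. -/

namespace RegularReflection

variable {γ b β : ℝ}

theorem one_sub_mul_pos_of_lt_div (hγ : 1 < γ) (hb : 0 ≤ b) (hβ : 1 < β)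
    (hβup : β < (γ + 1) / (γ - 1 + 2 * b)) : 0 < 1 - b * β := by
  have hden : 0 < γ - 1 + 2 * b := by linarith
  have hgap : 0 < γ + 1 - (γ - 1 + 2 * b) * β := by
    linarith [(lt_div_iff₀ hden).mp hβup]
  linarith [mul_pos (sub_pos.2 hγ) (sub_pos.2 hβ)]

theorem compression_pos (hγ : 1 < γ) (hb : b < 1) (hβ : 1 < β) :
    0 < (γ + 1 - 2 * b) * β - (γ - 1) := by
  have hexp : (γ + 1 - 2 * b) * β - (γ - 1) = (γ - 1) * (β - 1) + 2 * β * (1 - b) := by ring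
  rw [hexp]
  exact add_pos (mul_pos (sub_pos.2 hγ) (sub_pos.2 hβ))
    (mul_pos (by linarith) (sub_pos.2 hb))

theorem coeff0_neg (hβ : 1 < β) (hs : 0 < 1 - b * β) :
    -(1 - b * β) ^ 2 * (β - 1) ^ 2 / β < 0 :=
  div_neg_of_neg_of_pos
    (mul_neg_of_neg_of_pos (neg_neg_of_pos (pow_pos hs 2)) (pow_pos (sub_pos.2 hβ) 2))
    (by linarith)

theorem coeff1_neg (hγ : 1 < γ) (hb : b < 1) (hβ : 1 < β) (hs : 0 < 1 - b * β) :
    (1 - b * β) ^ 2 * (β - 1) * (3 - 1 / β)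
      - 2 * (β - 1) * (1 - b * β) * ((γ + 1 - 2 * b) * β - (γ - 1)) < 0 := by
  have hβ0 : 0 < β := by linarith
  have hd := sub_pos.2 hβ
  have hfactor : (1 - b * β) ^ 2 * (β - 1) * (3 - 1 / β)
      - 2 * (β - 1) * (1 - b * β) * ((γ + 1 - 2 * b) * β - (γ - 1))
      = -((1 - b * β) * (β - 1) * (2 * β * (γ - 1) * (β - 1) + (3 * β - 1) * (β - 1)
          + β * (β + 1) * (1 - b))) / β := by
    field_simp
    ring
  rw [hfactor]
  refine div_neg_of_neg_of_pos (neg_neg_of_pos ?_) hβ0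
  refine mul_pos (mul_pos hs hd) (add_pos (add_pos ?_ ?_) ?_)
  · exact mul_pos (mul_pos (by linarith) (sub_pos.2 hγ)) hd
  · exact mul_pos (by linarith) hd
  · exact mul_pos (mul_pos hβ0 (by linarith)) (sub_pos.2 hb)

theorem coeff2_neg (hγ : 1 < γ) (hb0 : 0 ≤ b) (hb1 : b < 1) (hβ : 1 < β)
    (hs : 0 < 1 - b * β) :
    -((3 * β - 2) * (1 - b * β) ^ 2
      + (β - 1) * ((γ + 1 - 2 * b) * β - (γ - 1)) * (γ - 1 + 2 * b * β)) < 0 := by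
  have hq := compression_pos hγ hb1 hβ
  have hw : 0 < γ - 1 + 2 * b * β := by nlinarith
  exact neg_neg_of_pos (add_pos (mul_pos (by linarith) (pow_pos hs 2))
    (mul_pos (mul_pos (sub_pos.2 hβ) hq) hw))

theorem coeff3_pos (hβ : 1 < β) (hs : 0 < 1 - b * β) : 0 < β * (1 - b * β) ^ 2 :=
  mul_pos (by linarith) (pow_pos hs 2)

end RegularReflection

open RegularReflection in
/-- Signs of the coefficients of the cubic `F̃(β, X) = h₀ + h₁X + h₂X² + h₃X³`
governing regular reflection in a van der Waals gas. -/
theorem cubic_coefficient_signs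
    (γ bt β : ℝ)
    (hγ : 1 < γ) (hbt0 : 0 ≤ bt) (hbt1 : bt < 1)
    (hβ : 1 < β) (hβup : β < (γ + 1) / (γ - 1 + 2 * bt)) :
    (-(1 - bt * β) ^ 2 * (β - 1) ^ 2 / β < 0) ∧
    ((1 - bt * β) ^ 2 * (β - 1) * (3 - 1 / β)
      - 2 * (β - 1) * (1 - bt * β) * ((γ + 1 - 2 * bt) * β - (γ - 1)) < 0) ∧
    (-((3 * β - 2) * (1 - bt * β) ^ 2
      + (β - 1) * ((γ + 1 - 2 * bt) * β - (γ - 1)) * (γ - 1 + 2 * bt * β)) < 0) ∧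
    (0 < β * (1 - bt * β) ^ 2) := by
  have hs := one_sub_mul_pos_of_lt_div hγ hbt0 hβ hβup
  exact ⟨coeff0_neg hβ hs, coeff1_neg hγ hbt1 hβ hs, coeff2_neg hγ hbt0 hbt1 hβ hs,
    coeff3_pos hβ hs⟩
end

section
/- Let γ > 1, 0 ≤ b̃ < 1 and 1 < β < (γ+1)/(γ−1+2b̃). Define F(β, s) = s(1 + β²s)²(1 − b̃β)² − (β − 1)(1 + βs)((γ+1−2b̃)β − (γ−1))((γ−1+2b̃β)βs + (γ+1)) for s ≥ 0. Then there exists a critical angle φ* ∈ (0, π/2), depending on β, b̃ and γ, such that for every φ ∈ (0, π/2): F(β, tan²φ) ≥ 0 if and only if φ ≥ φ*. Equivalently, there exists J = J(β, b̃, γ) > 0 such that F(β, tan²φ) ≥ 0 if and only if tan²φ ≥ J. -/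
/-!
Up to positive constants, `F(s) = a s (1 + β²s)² - K (1 + βs)(Ds + E)` with `a, K, E > 0`,
`D ≥ 0`, so for `s ≥ 0` it has the sign of `a r(s) - K`, where
`r(s) = s (1 + β²s)² / ((1 + βs)(Ds + E))` is monotone, vanishes at `0` and is unbounded.
Hence `{s ≥ 0 | F s ≥ 0}` is a closed half-line `[J, ∞)` with `J > 0`, and `φ* = arctan √J`.
-/

open Real

/-- `F(β, s)` is `reflectionDiscriminant β a K D E s` with `a = (1 - b̃β)²`,
`K = (β - 1)((γ + 1 - 2b̃)β - (γ - 1))`, `D = (γ - 1 + 2b̃β)β` and `E = γ + 1`. -/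
def reflectionDiscriminant (β a K D E s : ℝ) : ℝ :=
  a * s * (1 + β ^ 2 * s) ^ 2 - K * ((1 + β * s) * (D * s + E))

/-- The ratio `s (1 + β²s)² / ((1 + βs)(Ds + E))` is monotone on `[0, ∞)`, in cross-multiplied
form. -/
lemma ratio_cross_mul_le_of_le {β D E u s : ℝ} (hβ : 1 ≤ 2 * β) (hD : 0 ≤ D) (hE : 0 ≤ E)
    (hu : 0 ≤ u) (hus : u ≤ s) :
    u * (1 + β ^ 2 * u) ^ 2 * ((1 + β * s) * (D * s + E))
      ≤ s * (1 + β ^ 2 * s) ^ 2 * ((1 + β * u) * (D * u + E)) := by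
  have hs : 0 ≤ s := hu.trans hus
  have hβ0 : 0 ≤ β := by linarith
  have hdiff : s * (1 + β ^ 2 * s) ^ 2 * ((1 + β * u) * (D * u + E))
      - u * (1 + β ^ 2 * u) ^ 2 * ((1 + β * s) * (D * s + E))
      = (s - u) * ((E + 2*E*s*β^2 + E*s^2*β^4 + 2*E*u*β^2 + 2*E*u*s*β^3 + E*u*s*β^4
        + E*u*s^2*β^5 + E*u^2*β^4 + E*u^2*s*β^5 + D*u*s^2*β^4 + D*u^2*s*β^4
        + D*u^2*s^2*β^5) + D*u*s*β*(2*β - 1)) := by ring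
  rw [← sub_nonneg, hdiff]
  exact mul_nonneg (sub_nonneg.2 hus) (add_nonneg (by positivity)
    (mul_nonneg (by positivity) (by linarith)))

lemma exists_pos_threshold_of_continuous {f : ℝ → ℝ} (hf : Continuous f) (h0 : f 0 < 0)
    (hne : ∃ s, 0 ≤ s ∧ 0 ≤ f s) (hup : ∀ u s, 0 ≤ u → u ≤ s → 0 ≤ f u → 0 ≤ f s) :
    ∃ J, 0 < J ∧ ∀ s, 0 ≤ s → (0 ≤ f s ↔ J ≤ s) := by
  set S := {s : ℝ | 0 ≤ s ∧ 0 ≤ f s}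
  have hbdd : BddBelow S := ⟨0, fun _ hx => hx.1⟩
  have hclosed : IsClosed S :=
    (isClosed_le continuous_const continuous_id).inter (isClosed_le continuous_const hf)
  obtain ⟨hJ0, hfJ⟩ : sInf S ∈ S := hclosed.csInf_mem hne hbdd
  refine ⟨sInf S, lt_of_le_of_ne hJ0 ?_, fun s hs => ⟨fun h => csInf_le hbdd ⟨hs, h⟩,
    fun h => hup _ s hJ0 h hfJ⟩⟩
  rintro hJ
  rw [← hJ] at hfJ
  exact h0.not_ge hfJ

section reflectionDiscriminant

variable {β a K D E : ℝ}

lemma continuous_reflectionDiscriminant : Continuous (reflectionDiscriminant β a K D E) := by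
  unfold reflectionDiscriminant; fun_prop

lemma reflectionDiscriminant_zero (hK : 0 < K) (hE : 0 < E) :
    reflectionDiscriminant β a K D E 0 < 0 := by
  simp only [reflectionDiscriminant, mul_zero, zero_mul, add_zero, zero_sub, neg_neg_iff_pos]
  positivity

lemma reflectionDiscriminant_nonneg_of_le (hβ : 1 ≤ 2 * β) (ha : 0 ≤ a) (hD : 0 ≤ D) (hE : 0 < E)
    {u s : ℝ} (hu : 0 ≤ u) (hus : u ≤ s)
    (hfu : 0 ≤ reflectionDiscriminant β a K D E u) :
    0 ≤ reflectionDiscriminant β a K D E s := by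
  unfold reflectionDiscriminant at *
  have hs : 0 ≤ s := hu.trans hus
  have hβ0 : 0 ≤ β := by linarith
  have hfu' : K * ((1 + β * u) * (D * u + E)) ≤ a * u * (1 + β ^ 2 * u) ^ 2 := by linarith
  have key : K * ((1 + β * s) * (D * s + E)) * ((1 + β * u) * (D * u + E))
      ≤ a * s * (1 + β ^ 2 * s) ^ 2 * ((1 + β * u) * (D * u + E)) :=
    calc K * ((1 + β * s) * (D * s + E)) * ((1 + β * u) * (D * u + E))
        = K * ((1 + β * u) * (D * u + E)) * ((1 + β * s) * (D * s + E)) := by ring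
      _ ≤ a * u * (1 + β ^ 2 * u) ^ 2 * ((1 + β * s) * (D * s + E)) := by gcongr
      _ = a * (u * (1 + β ^ 2 * u) ^ 2 * ((1 + β * s) * (D * s + E))) := by ring
      _ ≤ a * (s * (1 + β ^ 2 * s) ^ 2 * ((1 + β * u) * (D * u + E))) :=
        mul_le_mul_of_nonneg_left (ratio_cross_mul_le_of_le hβ hD hE.le hu hus) ha
      _ = a * s * (1 + β ^ 2 * s) ^ 2 * ((1 + β * u) * (D * u + E)) := by ring
  exact sub_nonneg.2 (le_of_mul_le_mul_right key (by positivity))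

lemma exists_reflectionDiscriminant_nonneg (hβ : 0 < β) (ha : 0 < a) (hK : 0 ≤ K)
    (hD : 0 ≤ D) (hE : 0 ≤ E) : ∃ s, 0 ≤ s ∧ 0 ≤ reflectionDiscriminant β a K D E s := by
  set s := max 1 (K * (1 + β) * (D + E) / (a * β ^ 4))
  have hs1 : 1 ≤ s := le_max_left _ _
  have hs0 : 0 ≤ s := by linarith
  have hcoef : K * (1 + β) * (D + E) ≤ a * β ^ 4 * s :=
    (div_le_iff₀' (by positivity)).1 (le_max_right _ _)
  refine ⟨s, hs0, sub_nonneg.2 ?_⟩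
  calc K * ((1 + β * s) * (D * s + E))
      ≤ K * (((1 + β) * s) * ((D + E) * s)) := by gcongr <;> nlinarith
    _ = K * (1 + β) * (D + E) * s ^ 2 := by ring
    _ ≤ a * β ^ 4 * s * s ^ 2 := by gcongr
    _ = a * s * (β ^ 2 * s) ^ 2 := by ring
    _ ≤ a * s * (1 + β ^ 2 * s) ^ 2 := by gcongr; linarith

lemma exists_threshold_reflectionDiscriminant (hβ : 1 ≤ 2 * β) (ha : 0 < a) (hK : 0 < K)
    (hD : 0 ≤ D) (hE : 0 < E) :
    ∃ J, 0 < J ∧ ∀ s, 0 ≤ s → (0 ≤ reflectionDiscriminant β a K D E s ↔ J ≤ s) :=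
  exists_pos_threshold_of_continuous continuous_reflectionDiscriminant
    (reflectionDiscriminant_zero hK hE)
    (exists_reflectionDiscriminant_nonneg (by linarith) ha hK.le hD hE.le)
    fun _ _ hu hus => reflectionDiscriminant_nonneg_of_le hβ ha.le hD hE hu hus

end reflectionDiscriminant

lemma le_tan_sq_iff_arctan_sqrt_le {J φ : ℝ} (hφ0 : 0 ≤ φ) (hφ : φ < π / 2) :
    J ≤ tan φ ^ 2 ↔ arctan √J ≤ φ := by
  rw [← sqrt_le_left (tan_nonneg_of_nonneg_of_le_pi_div_two hφ0 hφ.le), ← arctan_le_arctan_iff,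
    arctan_tan (by linarith [pi_pos]) hφ]

theorem critical_angle_for_regular_reflection_general
    (γ bt β : ℝ) (F : ℝ → ℝ)
    (hγ : 1 < γ) (hbt0 : 0 ≤ bt)
    (hβ : 1 < β) (hβup : β < (γ + 1) / (γ - 1 + 2 * bt))
    (hF : ∀ s : ℝ, F s
      = s * (1 + β ^ 2 * s) ^ 2 * (1 - bt * β) ^ 2
        - (β - 1) * (1 + β * s) * ((γ + 1 - 2 * bt) * β - (γ - 1))
          * ((γ - 1 + 2 * bt * β) * β * s + (γ + 1))) :
    (∃ φstar ∈ Set.Ioo (0 : ℝ) (π / 2),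
      ∀ φ ∈ Set.Ioo (0 : ℝ) (π / 2), (0 ≤ F (Real.tan φ ^ 2) ↔ φstar ≤ φ)) ∧
    (∃ J : ℝ, 0 < J ∧
      ∀ φ ∈ Set.Ioo (0 : ℝ) (π / 2), (0 ≤ F (Real.tan φ ^ 2) ↔ J ≤ Real.tan φ ^ 2)) := by
  have hβup' : β * (γ - 1 + 2 * bt) < γ + 1 := (lt_div_iff₀ (by linarith)).1 hβup
  have hA : 0 < 1 - bt * β := by nlinarith
  have hC : 0 < (γ + 1 - 2 * bt) * β - (γ - 1) := by nlinarith
  have hFeq : ∀ s, F s = reflectionDiscriminant β ((1 - bt * β) ^ 2)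
      ((β - 1) * ((γ + 1 - 2 * bt) * β - (γ - 1))) ((γ - 1 + 2 * bt * β) * β) (γ + 1) s := by
    intro s; rw [hF, reflectionDiscriminant]; ring
  obtain ⟨J, hJ, hFJ⟩ := exists_threshold_reflectionDiscriminant (β := β)
    (by linarith) (pow_pos hA 2) (mul_pos (sub_pos.2 hβ) hC)
    (mul_nonneg (by nlinarith : 0 ≤ γ - 1 + 2 * bt * β) (by linarith : 0 ≤ β))
    (by linarith : (0 : ℝ) < γ + 1)
  have hFφ : ∀ φ ∈ Set.Ioo (0 : ℝ) (π / 2), (0 ≤ F (tan φ ^ 2) ↔ J ≤ tan φ ^ 2) :=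
    fun φ _ => hFeq _ ▸ hFJ _ (sq_nonneg _)
  refine ⟨⟨arctan √J, ⟨arctan_pos.2 (sqrt_pos.2 hJ), arctan_lt_pi_div_two _⟩, fun φ hφ => ?_⟩,
    J, hJ, hFφ⟩
  rw [hFφ φ hφ, le_tan_sq_iff_arctan_sqrt_le hφ.1.le hφ.2]

/-- Existence of a critical incidence angle `φ*` (equivalently a critical value `J`
of `tan²φ`) for the regular reflection condition `F(β, tan²φ) ≥ 0` in a
van der Waals gas. -/
theorem critical_angle_for_regular_reflection
    (γ bt β : ℝ) (F : ℝ → ℝ)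
    (hγ : 1 < γ) (hbt0 : 0 ≤ bt) (hbt1 : bt < 1)
    (hβ : 1 < β) (hβup : β < (γ + 1) / (γ - 1 + 2 * bt))
    (hF : ∀ s : ℝ, F s
      = s * (1 + β ^ 2 * s) ^ 2 * (1 - bt * β) ^ 2
        - (β - 1) * (1 + β * s) * ((γ + 1 - 2 * bt) * β - (γ - 1))
          * ((γ - 1 + 2 * bt * β) * β * s + (γ + 1))) :
    (∃ φstar ∈ Set.Ioo (0 : ℝ) (π / 2),
      ∀ φ ∈ Set.Ioo (0 : ℝ) (π / 2), (0 ≤ F (Real.tan φ ^ 2) ↔ φstar ≤ φ)) ∧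
    (∃ J : ℝ, 0 < J ∧
      ∀ φ ∈ Set.Ioo (0 : ℝ) (π / 2), (0 ≤ F (Real.tan φ ^ 2) ↔ J ≤ Real.tan φ ^ 2)) :=
  critical_angle_for_regular_reflection_general γ bt β F hγ hbt0 hβ hβup hF
end

section
/- Let γ > 1, 0 ≤ b̃ < 1, 1 < β < (γ+1)/(γ−1+2b̃), and t > 0. Suppose F(β, t²) = t²(1 + β²t²)²(1 − b̃β)² − (β − 1)(1 + βt²)((γ+1−2b̃)β − (γ−1))((γ−1+2b̃β)βt² + (γ+1)) ≥ 0, and let T = [−t(1 + β²t²)(1 − b̃β) − sqrt(F(β, t²))] / ((1 + βt²)((γ+1−2b̃)β − (γ−1))) be the minus branch of tan φ_r. Then β_r := (γ+1)(1 + β²t²) / ((γ+1)β(1 + T²) + (γ−1+2b̃β)(β²t² − T²)) satisfies 1 < β_r < (γ+1)/(γ−1+2b̃β). -/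
/-!
Write `e = (γ+1-2b̃)β - (γ-1)` and `D = γ-1+2b̃β`; both are positive in the admissible range.
The denominator of `β_r` equals `D (1+β²t²) + e (1+T²)`, so the upper bound amounts to `e > 0`.
The minus branch `T` is the smaller root of the quadratic
`(1+βt²) e X² + 2t(1+β²t²)(1-b̃β) X + (β-1)(Dβt² + γ+1)`, whose reduced discriminant is `F`;
using this equation, `β_r > 1` becomes `T > -βt`. That holds because `-βt` lies to the left of
the vertex and the quadratic is positive there, with value `(γ+1)(β-1)(1+βt²)(1+β²t²)`.
-/

lemma lt_neg_sub_sqrt_div_of_quadratic_pos {p a c x : ℝ} (hp : 0 < p) (hx : p * x + a < 0)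
    (hq : 0 < p * x ^ 2 + 2 * a * x + c) : x < (-a - √(a ^ 2 - p * c)) / p := by
  have hgap : a ^ 2 - p * c < (-a - p * x) ^ 2 := by nlinarith
  rw [lt_div_iff₀ hp]
  linarith [(Real.sqrt_lt' (by linarith)).2 hgap]

lemma quadratic_at_neg_sub_div_eq_zero {K : Type*} [Field K] {p a c s : K} (hp : p ≠ 0)
    (hs : s ^ 2 = a ^ 2 - p * c) :
    p * ((-a - s) / p) ^ 2 + 2 * a * ((-a - s) / p) + c = 0 := by
  field_simp
  linear_combination hs

namespace VdWShock

variable {γ bt β t T : ℝ}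

lemma covolume_lt_one (hγ : 1 < γ) (hβ : 1 < β) (h : β * (γ - 1 + 2 * bt) < γ + 1) :
    bt * β < 1 := by
  nlinarith

lemma compression_pos (hγ : 1 < γ) (hβ : 1 < β) (h : β * (γ - 1 + 2 * bt) < γ + 1) :
    0 < (γ + 1 - 2 * bt) * β - (γ - 1) := by
  nlinarith

lemma reflected_denom_eq :
    (γ + 1) * β * (1 + T ^ 2) + (γ - 1 + 2 * bt * β) * (β ^ 2 * t ^ 2 - T ^ 2)
      = (γ - 1 + 2 * bt * β) * (1 + β ^ 2 * t ^ 2)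
        + ((γ + 1 - 2 * bt) * β - (γ - 1)) * (1 + T ^ 2) := by
  ring

lemma reflected_ratio_lt (hγ : 0 < γ + 1) (hD : 0 < γ - 1 + 2 * bt * β)
    (he : 0 < (γ + 1 - 2 * bt) * β - (γ - 1)) :
    (γ + 1) * (1 + β ^ 2 * t ^ 2)
        / ((γ + 1) * β * (1 + T ^ 2) + (γ - 1 + 2 * bt * β) * (β ^ 2 * t ^ 2 - T ^ 2))
      < (γ + 1) / (γ - 1 + 2 * bt * β) := by
  rw [reflected_denom_eq, div_lt_div_iff₀ (by positivity) hD]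
  nlinarith [mul_pos hγ (mul_pos he (by positivity : (0 : ℝ) < 1 + T ^ 2))]

lemma one_lt_reflected_ratio (hβ : 0 ≤ β) (ht : 0 < t) (hm : 0 < 1 - bt * β)
    (hD : 0 < γ - 1 + 2 * bt * β) (he : 0 < (γ + 1 - 2 * bt) * β - (γ - 1))
    (hroot : (1 + β * t ^ 2) * ((γ + 1 - 2 * bt) * β - (γ - 1)) * T ^ 2
      + 2 * (t * (1 + β ^ 2 * t ^ 2) * (1 - bt * β)) * T
      + (β - 1) * ((γ - 1 + 2 * bt * β) * β * t ^ 2 + (γ + 1)) = 0)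
    (hT : -(β * t) < T) :
    1 < (γ + 1) * (1 + β ^ 2 * t ^ 2)
      / ((γ + 1) * β * (1 + T ^ 2) + (γ - 1 + 2 * bt * β) * (β ^ 2 * t ^ 2 - T ^ 2)) := by
  have hu : 0 < 1 + β * t ^ 2 := by positivity
  have hgap : (1 + β * t ^ 2) * ((γ + 1) * (1 + β ^ 2 * t ^ 2)
        - ((γ + 1) * β * (1 + T ^ 2) + (γ - 1 + 2 * bt * β) * (β ^ 2 * t ^ 2 - T ^ 2)))
      = 2 * (t * (1 + β ^ 2 * t ^ 2) * (1 - bt * β)) * (T + β * t) := by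
    linear_combination (-1 : ℝ) * hroot
  have hgap_pos : 0 < 2 * (t * (1 + β ^ 2 * t ^ 2) * (1 - bt * β)) * (T + β * t) := by
    have : 0 < T + β * t := by linarith
    positivity
  have hden : 0 < (γ + 1) * β * (1 + T ^ 2) + (γ - 1 + 2 * bt * β) * (β ^ 2 * t ^ 2 - T ^ 2) := by
    rw [reflected_denom_eq]; positivity
  rw [one_lt_div hden, ← sub_pos]
  exact pos_of_mul_pos_right (hgap ▸ hgap_pos) hu.le

lemma neg_mul_lt_reflected_tan (hγ : 1 < γ) (hβ : 1 < β) (ht : 0 < t) (hm : 0 < 1 - bt * β)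
    (he : 0 < (γ + 1 - 2 * bt) * β - (γ - 1)) :
    -(β * t) < (-(t * (1 + β ^ 2 * t ^ 2) * (1 - bt * β))
        - √((t * (1 + β ^ 2 * t ^ 2) * (1 - bt * β)) ^ 2
          - (1 + β * t ^ 2) * ((γ + 1 - 2 * bt) * β - (γ - 1))
            * ((β - 1) * ((γ - 1 + 2 * bt * β) * β * t ^ 2 + (γ + 1)))))
      / ((1 + β * t ^ 2) * ((γ + 1 - 2 * bt) * β - (γ - 1))) := by
  have hβ1 : 0 < β - 1 := sub_pos.2 hβ
  have hγ1 : 0 < γ + 1 := by linarith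
  apply lt_neg_sub_sqrt_div_of_quadratic_pos (by positivity)
  · have hgap : 0 < (1 + β ^ 2 * t ^ 2) * ((γ + 1) * (β - 1) + (1 - bt * β))
        + (β - 1) * ((γ + 1 - 2 * bt) * β - (γ - 1)) := by positivity
    linear_combination mul_pos ht hgap
  · have hq : 0 < (γ + 1) * (β - 1) * (1 + β * t ^ 2) * (1 + β ^ 2 * t ^ 2) := by positivity
    linear_combination hq

end VdWShock

theorem reflected_density_ratio_entropy_bounds_general
    (γ bt β t T Fval βr : ℝ)
    (hγ : 1 < γ) (hbt0 : 0 ≤ bt)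
    (hβ : 1 < β) (hβup : β < (γ + 1) / (γ - 1 + 2 * bt)) (ht : 0 < t)
    (hFval : Fval = t ^ 2 * (1 + β ^ 2 * t ^ 2) ^ 2 * (1 - bt * β) ^ 2
      - (β - 1) * (1 + β * t ^ 2) * ((γ + 1 - 2 * bt) * β - (γ - 1))
        * ((γ - 1 + 2 * bt * β) * β * t ^ 2 + (γ + 1)))
    (hFnn : 0 ≤ Fval)
    (hT : T = (-t * (1 + β ^ 2 * t ^ 2) * (1 - bt * β) - Real.sqrt Fval)
      / ((1 + β * t ^ 2) * ((γ + 1 - 2 * bt) * β - (γ - 1))))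
    (hβr : βr = (γ + 1) * (1 + β ^ 2 * t ^ 2)
      / ((γ + 1) * β * (1 + T ^ 2) + (γ - 1 + 2 * bt * β) * (β ^ 2 * t ^ 2 - T ^ 2))) :
    1 < βr ∧ βr < (γ + 1) / (γ - 1 + 2 * bt * β) := by
  have hcoeff : β * (γ - 1 + 2 * bt) < γ + 1 := (lt_div_iff₀ (by linarith)).1 hβup
  have hD : 0 < γ - 1 + 2 * bt * β := by nlinarith [mul_nonneg hbt0 (by linarith : 0 ≤ β)]
  have he := VdWShock.compression_pos hγ hβ hcoeff
  have hm : 0 < 1 - bt * β := sub_pos.2 (VdWShock.covolume_lt_one hγ hβ hcoeff)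
  have hdisc : Fval = (t * (1 + β ^ 2 * t ^ 2) * (1 - bt * β)) ^ 2
      - (1 + β * t ^ 2) * ((γ + 1 - 2 * bt) * β - (γ - 1))
        * ((β - 1) * ((γ - 1 + 2 * bt * β) * β * t ^ 2 + (γ + 1))) := by
    rw [hFval]; ring
  have hT' : T = (-(t * (1 + β ^ 2 * t ^ 2) * (1 - bt * β))
        - √((t * (1 + β ^ 2 * t ^ 2) * (1 - bt * β)) ^ 2
          - (1 + β * t ^ 2) * ((γ + 1 - 2 * bt) * β - (γ - 1))
            * ((β - 1) * ((γ - 1 + 2 * bt * β) * β * t ^ 2 + (γ + 1)))))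
      / ((1 + β * t ^ 2) * ((γ + 1 - 2 * bt) * β - (γ - 1))) := by
    rw [hT, hdisc]; ring
  have hroot := quadratic_at_neg_sub_div_eq_zero (by positivity) (Real.sq_sqrt (hdisc ▸ hFnn))
  rw [← hT'] at hroot
  rw [hβr]
  exact ⟨VdWShock.one_lt_reflected_ratio (by linarith) ht hm hD he hroot
      (hT' ▸ VdWShock.neg_mul_lt_reflected_tan hγ hβ ht hm he),
    VdWShock.reflected_ratio_lt (by linarith) hD he⟩

/-- For the minus branch of `tan φ_r`, the reflected density ratio `β_r`
satisfies the entropy bounds `1 < β_r < (γ+1)/(γ-1+2b̃β)`. -/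
theorem reflected_density_ratio_entropy_bounds
    (γ bt β t T Fval βr : ℝ)
    (hγ : 1 < γ) (hbt0 : 0 ≤ bt) (hbt1 : bt < 1)
    (hβ : 1 < β) (hβup : β < (γ + 1) / (γ - 1 + 2 * bt)) (ht : 0 < t)
    (hFval : Fval = t ^ 2 * (1 + β ^ 2 * t ^ 2) ^ 2 * (1 - bt * β) ^ 2
      - (β - 1) * (1 + β * t ^ 2) * ((γ + 1 - 2 * bt) * β - (γ - 1))
        * ((γ - 1 + 2 * bt * β) * β * t ^ 2 + (γ + 1)))
    (hFnn : 0 ≤ Fval)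
    (hT : T = (-t * (1 + β ^ 2 * t ^ 2) * (1 - bt * β) - Real.sqrt Fval)
      / ((1 + β * t ^ 2) * ((γ + 1 - 2 * bt) * β - (γ - 1))))
    (hβr : βr = (γ + 1) * (1 + β ^ 2 * t ^ 2)
      / ((γ + 1) * β * (1 + T ^ 2) + (γ - 1 + 2 * bt * β) * (β ^ 2 * t ^ 2 - T ^ 2))) :
    1 < βr ∧ βr < (γ + 1) / (γ - 1 + 2 * bt * β) :=
  reflected_density_ratio_entropy_bounds_general γ bt β t T Fval βr hγ hbt0 hβ hβup ht hFval hFnn hT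
    hβr
end

section
/- Let γ > 1 and 0 ≤ b̃ < 1, and define g(ε) = ln[((γ+1−2b̃)(1+ε) − (γ−1)) / ((γ+1) − (γ−1+2b̃)(1+ε))] + γ ln[(1 − b̃(1+ε)) / ((1+ε)(1 − b̃))] for ε in a neighborhood of 0. Then g(0) = 0, g′(0) = 0, g″(0) = 0, and g‴(0)/6 = γ(γ²−1)/(12(1 − b̃)³); that is, the entropy jump across a weak shock of strength ε in a van der Waals gas satisfies (S₁ − S₀)/c_v = (γ(γ²−1)/(12(1−b̃)³))ε³ + O(ε⁴) as ε → 0. -/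
/-!
Since `(γ + 1 - 2b̃)(1 + ε) - (γ - 1) = 2(1 - b̃)(1 + αε)`, `(γ + 1) - (γ - 1 + 2b̃)(1 + ε) =
2(1 - b̃)(1 - βε)` and `1 - b̃(1 + ε) = (1 - b̃)(1 - κε)` with `α = (γ + 1 - 2b̃)/(2(1 - b̃))`,
`β = (γ - 1 + 2b̃)/(2(1 - b̃))`, `κ = b̃/(1 - b̃)`, near `ε = 0` the jump is
`log (1 + αε) - log (1 - βε) + γ (log (1 - κε) - log (1 + ε))`. Each term is analytic with Taylor
coefficients `-(-a)ⁿ/n`, so `g` has explicit Taylor coefficients; those of `ε` and `ε²` cancel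
(`α + β = γ (1 + κ)` and `α² - β² = γ (1 - κ²)`), and that of `ε³` is the claimed constant. The
derivatives at `0` and the `O(ε⁴)` remainder are then read off the power series.
-/

open Filter Asymptotics Topology

namespace HasFPowerSeriesAt

variable {𝕜 : Type*} [NontriviallyNormedField 𝕜] {f : 𝕜 → 𝕜} {c : ℕ → 𝕜}

theorem comp_const_mul (hf : HasFPowerSeriesAt f (.ofScalars 𝕜 c) 0) (a : 𝕜) :
    HasFPowerSeriesAt (fun x ↦ f (a * x)) (.ofScalars 𝕜 fun n ↦ a ^ n * c n) 0 := by
  rw [← map_zero (a • ContinuousLinearMap.id 𝕜 𝕜)] at hf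
  convert hf.compContinuousLinearMap using 1
  · rfl
  · ext n
    simp [FormalMultilinearSeries.compContinuousLinearMap, mul_comm]

theorem iteratedDeriv_eq_factorial_mul [CompleteSpace 𝕜] [CharZero 𝕜] {x : 𝕜}
    (hf : HasFPowerSeriesAt f (.ofScalars 𝕜 c) x) (n : ℕ) :
    iteratedDeriv n f x = n.factorial * c n := by
  have hc := FormalMultilinearSeries.ofScalars_series_injective 𝕜 𝕜
    (hf.eq_formalMultilinearSeries hf.analyticAt.hasFPowerSeriesAt)
  rw [congrFun hc n, mul_div_cancel₀ _ (Nat.cast_ne_zero.2 n.factorial_ne_zero)]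

theorem isBigO_sub_sum_pow (hf : HasFPowerSeriesAt f (.ofScalars 𝕜 c) 0) (n : ℕ) :
    (fun x ↦ f x - ∑ k ∈ Finset.range n, c k * x ^ k) =O[𝓝 0] fun x ↦ x ^ n := by
  have h := hf.isBigO_sub_partialSum_pow n
  simp only [zero_add, FormalMultilinearSeries.partialSum,
    FormalMultilinearSeries.ofScalars_apply_eq, smul_eq_mul, ← norm_pow] at h
  exact h.of_norm_right

end HasFPowerSeriesAt

theorem hasFPowerSeriesAt_log_one_add_mul (a : ℝ) :
    HasFPowerSeriesAt (fun x ↦ Real.log (1 + a * x)) (.ofScalars ℝ fun n ↦ -(-a) ^ n / n) 0 := by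
  have hc : (fun n : ℕ ↦ a ^ n * (-(-1 : ℝ) ^ n / n)) = fun n : ℕ ↦ -(-a) ^ n / n := by
    funext n
    rw [neg_pow a]
    ring
  have h := hasFPowerSeriesAt_log_one_add.comp_const_mul a
  rwa [hc] at h

open Real

theorem eventually_one_add_mul_pos (a : ℝ) : ∀ᶠ x in 𝓝 0, 0 < 1 + a * x :=
  continuousAt_const.eventually_lt (by fun_prop) (by simp)

noncomputable def shockEntropyJump (γ bt ε : ℝ) : ℝ :=
  log (((γ + 1 - 2 * bt) * (1 + ε) - (γ - 1)) / ((γ + 1) - (γ - 1 + 2 * bt) * (1 + ε)))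
    + γ * log ((1 - bt * (1 + ε)) / ((1 + ε) * (1 - bt)))

section ShockEntropyJump

variable (γ : ℝ) {bt : ℝ}

theorem shockEntropyJump_eventuallyEq (hbt : bt ≠ 1) :
    shockEntropyJump γ bt =ᶠ[𝓝 0] fun ε ↦
      log (1 + (γ + 1 - 2 * bt) / (2 * (1 - bt)) * ε)
        - log (1 + -((γ - 1 + 2 * bt) / (2 * (1 - bt))) * ε)
        + γ * (log (1 + -(bt / (1 - bt)) * ε) - log (1 + 1 * ε)) := by
  have hs : 1 - bt ≠ 0 := sub_ne_zero.2 hbt.symm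
  filter_upwards [eventually_one_add_mul_pos ((γ + 1 - 2 * bt) / (2 * (1 - bt))),
    eventually_one_add_mul_pos (-((γ - 1 + 2 * bt) / (2 * (1 - bt)))),
    eventually_one_add_mul_pos (-(bt / (1 - bt))), eventually_one_add_mul_pos 1]
    with ε hα hβ hκ h1
  have hpressure : ((γ + 1 - 2 * bt) * (1 + ε) - (γ - 1)) / ((γ + 1) - (γ - 1 + 2 * bt) * (1 + ε))
      = (1 + (γ + 1 - 2 * bt) / (2 * (1 - bt)) * ε)
        / (1 + -((γ - 1 + 2 * bt) / (2 * (1 - bt))) * ε) := by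
    field_simp
    ring
  have hvolume : (1 - bt * (1 + ε)) / ((1 + ε) * (1 - bt))
      = (1 + -(bt / (1 - bt)) * ε) / (1 + 1 * ε) := by
    field_simp
    ring
  rw [shockEntropyJump, hpressure, hvolume, log_div hα.ne' hβ.ne', log_div hκ.ne' h1.ne']

-- The `n = 0` coefficient is `0` only through `x / 0 = 0`; it agrees with `g 0 = 0`.
noncomputable def shockEntropyJumpCoeff (γ bt : ℝ) (n : ℕ) : ℝ :=
  (-(-((γ + 1 - 2 * bt) / (2 * (1 - bt)))) ^ n + ((γ - 1 + 2 * bt) / (2 * (1 - bt))) ^ n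
    + γ * ((-1) ^ n - (bt / (1 - bt)) ^ n)) / n

theorem hasFPowerSeriesAt_shockEntropyJump (hbt : bt ≠ 1) :
    HasFPowerSeriesAt (shockEntropyJump γ bt)
      (.ofScalars ℝ (shockEntropyJumpCoeff γ bt)) 0 := by
  have h := ((hasFPowerSeriesAt_log_one_add_mul ((γ + 1 - 2 * bt) / (2 * (1 - bt)))).sub
    (hasFPowerSeriesAt_log_one_add_mul (-((γ - 1 + 2 * bt) / (2 * (1 - bt)))))).add
    (((hasFPowerSeriesAt_log_one_add_mul (-(bt / (1 - bt)))).sub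
      (hasFPowerSeriesAt_log_one_add_mul 1)).const_smul (c := γ))
  refine HasFPowerSeriesAt.congr ?_ (shockEntropyJump_eventuallyEq γ hbt).symm
  convert h using 1
  · rfl
  rw [← FormalMultilinearSeries.ofScalars_sub, ← FormalMultilinearSeries.ofScalars_sub,
    ← FormalMultilinearSeries.ofScalars_smul, ← FormalMultilinearSeries.ofScalars_add]
  congr 1
  funext n
  simp only [shockEntropyJumpCoeff, Pi.add_apply, Pi.sub_apply, Pi.smul_apply, smul_eq_mul]
  ring

theorem shockEntropyJumpCoeff_zero (bt : ℝ) : shockEntropyJumpCoeff γ bt 0 = 0 := by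
  simp [shockEntropyJumpCoeff]

theorem shockEntropyJumpCoeff_one (hbt : bt ≠ 1) : shockEntropyJumpCoeff γ bt 1 = 0 := by
  have hs : 1 - bt ≠ 0 := sub_ne_zero.2 hbt.symm
  simp only [shockEntropyJumpCoeff]
  field_simp
  ring

theorem shockEntropyJumpCoeff_two (hbt : bt ≠ 1) : shockEntropyJumpCoeff γ bt 2 = 0 := by
  have hs : 1 - bt ≠ 0 := sub_ne_zero.2 hbt.symm
  simp only [shockEntropyJumpCoeff]
  field_simp
  ring

theorem shockEntropyJumpCoeff_three (hbt : bt ≠ 1) :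
    shockEntropyJumpCoeff γ bt 3 = γ * (γ ^ 2 - 1) / (12 * (1 - bt) ^ 3) := by
  have hs : 1 - bt ≠ 0 := sub_ne_zero.2 hbt.symm
  simp only [shockEntropyJumpCoeff]
  field_simp
  ring

end ShockEntropyJump

theorem weak_shock_entropy_expansion_general
    (γ bt : ℝ) (g : ℝ → ℝ)
    (hbt1 : bt < 1)
    (hg : ∀ ε : ℝ, g ε
      = Real.log (((γ + 1 - 2 * bt) * (1 + ε) - (γ - 1))
          / ((γ + 1) - (γ - 1 + 2 * bt) * (1 + ε)))
        + γ * Real.log ((1 - bt * (1 + ε)) / ((1 + ε) * (1 - bt)))) :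
    g 0 = 0 ∧ deriv g 0 = 0 ∧ iteratedDeriv 2 g 0 = 0 ∧
      iteratedDeriv 3 g 0 / 6 = γ * (γ ^ 2 - 1) / (12 * (1 - bt) ^ 3) ∧
      (fun ε : ℝ => g ε - γ * (γ ^ 2 - 1) / (12 * (1 - bt) ^ 3) * ε ^ 3)
        =O[nhds 0] fun ε : ℝ => ε ^ 4 := by
  obtain rfl : g = shockEntropyJump γ bt := funext hg
  have hbt : bt ≠ 1 := hbt1.ne
  have hseries := hasFPowerSeriesAt_shockEntropyJump γ hbt
  have hderiv := hseries.iteratedDeriv_eq_factorial_mul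
  refine ⟨?_, ?_, ?_, ?_, ?_⟩
  · simpa [shockEntropyJumpCoeff_zero] using hderiv 0
  · simpa [shockEntropyJumpCoeff_one γ hbt] using hderiv 1
  · simpa [shockEntropyJumpCoeff_two γ hbt] using hderiv 2
  · rw [hderiv 3, shockEntropyJumpCoeff_three γ hbt]
    norm_num [Nat.factorial]
  · simpa [Finset.sum_range_succ, shockEntropyJumpCoeff_zero, shockEntropyJumpCoeff_one γ hbt,
      shockEntropyJumpCoeff_two γ hbt, shockEntropyJumpCoeff_three γ hbt]
      using hseries.isBigO_sub_sum_pow 4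

/-- Weak-shock entropy jump in a van der Waals gas:
`(S₁-S₀)/c_v = (γ(γ²-1)/(12(1-b̃)³))ε³ + O(ε⁴)` as `ε → 0`. -/
theorem weak_shock_entropy_expansion
    (γ bt : ℝ) (g : ℝ → ℝ)
    (hγ : 1 < γ) (hbt0 : 0 ≤ bt) (hbt1 : bt < 1)
    (hg : ∀ ε : ℝ, g ε
      = Real.log (((γ + 1 - 2 * bt) * (1 + ε) - (γ - 1))
          / ((γ + 1) - (γ - 1 + 2 * bt) * (1 + ε)))
        + γ * Real.log ((1 - bt * (1 + ε)) / ((1 + ε) * (1 - bt)))) :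
    g 0 = 0 ∧ deriv g 0 = 0 ∧ iteratedDeriv 2 g 0 = 0 ∧
      iteratedDeriv 3 g 0 / 6 = γ * (γ ^ 2 - 1) / (12 * (1 - bt) ^ 3) ∧
      (fun ε : ℝ => g ε - γ * (γ ^ 2 - 1) / (12 * (1 - bt) ^ 3) * ε ^ 3)
        =O[nhds 0] fun ε : ℝ => ε ^ 4 :=
  weak_shock_entropy_expansion_general γ bt g hbt1 hg
end

section
/- Let α ∈ (0, π/2) and a₀ > 0, and define ζ*(θ) = a₀ tan α / (sin(θ − α) sec α + sin(2α − θ)) for θ near 2α. Then ζ*(2α) = a₀, (ζ*)′(2α) = 0, and (ζ*)″(2α) = a₀. Consequently, in the stretched coordinates r′ = (ζ*/c₀ − κ₀)/ε, θ′ = (θ − 2α)/√ε with c₀κ₀ = a₀, the straight reflected shock is asymptotically the parabola r′ = κ₀θ′²/2 as θ′ → ∞ (ε → 0). -/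
/-! Dividing the denominator by `tan α` turns the straight shock into the shifted secant
`ζ*(θ) = a₀ / cos (θ - 2α)`, whose value and first two derivatives at `θ = 2α` are `a₀`, `0`
and `a₀`. The parabolic asymptotics is then Taylor's theorem to second order at `2α`. -/

open Real Filter Asymptotics Set Topology

theorem ContDiffAt.isLittleO_sub_taylorWithinEval {E : Type*} [NormedAddCommGroup E]
    [NormedSpace ℝ E] {f : ℝ → E} {x₀ : ℝ} {n : ℕ} (hf : ContDiffAt ℝ n f x₀) :
    (fun x ↦ f x - taylorWithinEval f n univ x₀ x) =o[𝓝 x₀] fun x ↦ (x - x₀) ^ n := by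
  obtain ⟨u, hu, hfu⟩ := hf.contDiffOn le_rfl (by simp)
  obtain ⟨ε, hε, hball⟩ := Metric.mem_nhds_iff.mp hu
  have hx₀ : x₀ ∈ Metric.ball x₀ ε := Metric.mem_ball_self hε
  have htaylor : taylorWithinEval f n (Metric.ball x₀ ε) x₀ = taylorWithinEval f n univ x₀ := by
    ext x
    simp only [taylor_within_apply, iteratedDerivWithin_univ,
      iteratedDerivWithin_of_isOpen Metric.isOpen_ball hx₀]
  simpa [htaylor, Metric.isOpen_ball.nhdsWithin_eq hx₀] using
    taylor_isLittleO (convex_ball x₀ ε) hx₀ (hfu.mono hball)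

theorem taylorWithinEval_univ_two {E : Type*} [NormedAddCommGroup E] [NormedSpace ℝ E]
    (f : ℝ → E) (x₀ x : ℝ) :
    taylorWithinEval f 2 univ x₀ x =
      f x₀ + (x - x₀) • deriv f x₀ + ((x - x₀) ^ 2 / 2) • iteratedDeriv 2 f x₀ := by
  norm_num [taylor_within_apply, Finset.sum_range_succ, iteratedDerivWithin_univ, div_eq_inv_mul]

theorem sin_sub_mul_one_div_cos_add_sin_sub {α θ : ℝ} (hcos : cos α ≠ 0) :
    sin (θ - α) * (1 / cos α) + sin (2 * α - θ) = tan α * cos (θ - 2 * α) := by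
  have h₁ : θ - α = (θ - 2 * α) + α := by ring
  have h₂ : 2 * α - θ = -(θ - 2 * α) := by ring
  rw [h₁, h₂, sin_add, sin_neg, tan_eq_sin_div_cos]
  field_simp
  ring

theorem hasDerivAt_const_div_cos (a : ℝ) {x : ℝ} (hx : cos x ≠ 0) :
    HasDerivAt (fun u ↦ a / cos u) (a * sin x / cos x ^ 2) x :=
  ((hasDerivAt_const x a).div (hasDerivAt_cos x) hx).congr_deriv (by ring)

theorem deriv_const_div_cos_zero (a : ℝ) : deriv (fun u ↦ a / cos u) 0 = 0 := by
  simp [(hasDerivAt_const_div_cos a (x := 0) (by simp)).deriv]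

theorem iteratedDeriv_two_const_div_cos_zero (a : ℝ) :
    iteratedDeriv 2 (fun u ↦ a / cos u) 0 = a := by
  have hderiv : deriv (fun u ↦ a / cos u) =ᶠ[𝓝 0] fun u ↦ a * sin u / cos u ^ 2 := by
    filter_upwards [continuous_cos.continuousAt.eventually_ne (by simp : cos 0 ≠ 0)] with x hx
    exact (hasDerivAt_const_div_cos a hx).deriv
  rw [iteratedDeriv_succ, iteratedDeriv_one, hderiv.deriv_eq]
  simp

theorem iteratedDeriv_comp_sub_const_self {𝕜 F : Type*} [NontriviallyNormedField 𝕜]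
    [NormedAddCommGroup F] [NormedSpace 𝕜 F] (n : ℕ) (f : 𝕜 → F) (c : 𝕜) :
    iteratedDeriv n (fun x ↦ f (x - c)) c = iteratedDeriv n f 0 := by
  simp only [iteratedDeriv_comp_sub_const, sub_self]

theorem reflected_shock_parabolic_at_singular_point_general
    (α a₀ : ℝ) (hα : α ∈ Set.Ioo (0 : ℝ) (π / 2))
    (ζ : ℝ → ℝ)
    (hζ : ∀ θ : ℝ, ζ θ = a₀ * Real.tan α
      / (Real.sin (θ - α) * (1 / Real.cos α) + Real.sin (2 * α - θ))) :
    ζ (2 * α) = a₀ ∧ deriv ζ (2 * α) = 0 ∧ iteratedDeriv 2 ζ (2 * α) = a₀ ∧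
      (fun θ : ℝ => ζ θ - (a₀ + a₀ * (θ - 2 * α) ^ 2 / 2))
        =o[nhds (2 * α)] fun θ : ℝ => (θ - 2 * α) ^ 2 := by
  have hcos : cos α ≠ 0 := (cos_pos_of_mem_Ioo ⟨by linarith [hα.1, pi_pos], hα.2⟩).ne'
  have htan : tan α ≠ 0 := (tan_pos_of_pos_of_lt_pi_div_two hα.1 hα.2).ne'
  have hsec : ζ = fun θ ↦ a₀ / cos (θ - 2 * α) := by
    ext θ
    rw [hζ, sin_sub_mul_one_div_cos_add_sin_sub hcos, mul_comm a₀, mul_div_mul_left _ _ htan]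
  have hvalue : ζ (2 * α) = a₀ := by simp [hsec]
  have hderiv : deriv ζ (2 * α) = 0 := by
    rw [← iteratedDeriv_one, hsec, iteratedDeriv_comp_sub_const_self 1 (fun u ↦ a₀ / cos u),
      iteratedDeriv_one, deriv_const_div_cos_zero]
  have hderiv₂ : iteratedDeriv 2 ζ (2 * α) = a₀ := by
    rw [hsec, iteratedDeriv_comp_sub_const_self 2 (fun u ↦ a₀ / cos u),
      iteratedDeriv_two_const_div_cos_zero]
  have hsmooth : ContDiffAt ℝ 2 ζ (2 * α) := by
    rw [hsec]
    exact (contDiffAt_const.div contDiff_cos.contDiffAt (by simp)).comp _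
      (contDiffAt_id.sub contDiffAt_const)
  refine ⟨hvalue, hderiv, hderiv₂, hsmooth.isLittleO_sub_taylorWithinEval.congr_left fun θ ↦ ?_⟩
  rw [taylorWithinEval_univ_two, hvalue, hderiv, hderiv₂, smul_eq_mul, smul_eq_mul]
  ring

/-- Near the singular point `θ = 2α`, the straight reflected shock
`ζ*(θ) = a₀ tan α/(sin(θ-α) sec α + sin(2α-θ))` satisfies `ζ*(2α) = a₀`,
`(ζ*)′(2α) = 0`, `(ζ*)″(2α) = a₀`; hence it is asymptotically the parabola
`ζ* ≈ a₀ + a₀(θ-2α)²/2`. -/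
theorem reflected_shock_parabolic_at_singular_point
    (α a₀ : ℝ) (hα : α ∈ Set.Ioo (0 : ℝ) (π / 2)) (ha₀ : 0 < a₀)
    (ζ : ℝ → ℝ)
    (hζ : ∀ θ : ℝ, ζ θ = a₀ * Real.tan α
      / (Real.sin (θ - α) * (1 / Real.cos α) + Real.sin (2 * α - θ))) :
    ζ (2 * α) = a₀ ∧ deriv ζ (2 * α) = 0 ∧ iteratedDeriv 2 ζ (2 * α) = a₀ ∧
      (fun θ : ℝ => ζ θ - (a₀ + a₀ * (θ - 2 * α) ^ 2 / 2))
        =o[nhds (2 * α)] fun θ : ℝ => (θ - 2 * α) ^ 2 :=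
  reflected_shock_parabolic_at_singular_point_general α a₀ hα ζ hζ
end

section
/- Let κ₀ > 0 and define u(x, y) = arctan( sqrt(−2x/κ₀) / y ) on the region x < 0, y > 0. Then u satisfies the degenerate linear PDE 2κ₀ x u_{xx} + κ₀ u_x − u_{yy} = 0 throughout that region. -/
/-!
With `X = √(-2x/κ₀)`, i.e. `x = -κ₀X²/2`, the degenerate operator `2κ₀ x ∂ₓ² + κ₀ ∂ₓ` becomes
`-∂_X²`, so the equation turns into Laplace's equation in `(X, y)`, and `arctan (X / y)` is
harmonic on `y ≠ 0`.
-/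

open Real

theorem hasDerivAt_sqrt_neg_two_mul_div {κ x : ℝ} (hκ : 0 < κ) (hx : x < 0) :
    HasDerivAt (fun t => √(-2 * t / κ)) (-(κ * √(-2 * x / κ))⁻¹) x := by
  have hpos : 0 < -2 * x / κ := div_pos (by linarith) hκ
  have hlin : HasDerivAt (fun t => -2 * t / κ) (-2 / κ) x := by
    simpa using ((hasDerivAt_id x).const_mul (-2)).div_const κ
  convert hlin.sqrt hpos.ne' using 1
  have hsqrt_ne : √(-2 * x / κ) ≠ 0 := (sqrt_pos.mpr hpos).ne'
  field_simp

theorem degenerate_operator_comp_sqrt {κ x : ℝ} (hκ : 0 < κ) (hx : x < 0) {g g' : ℝ → ℝ}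
    {g'' : ℝ} (hg : ∀ X, 0 < X → HasDerivAt g (g' X) X)
    (hg' : HasDerivAt g' g'' √(-2 * x / κ)) :
    2 * κ * x * deriv (fun a => deriv (fun b => g √(-2 * b / κ)) a) x
      + κ * deriv (fun b => g √(-2 * b / κ)) x = -g'' := by
  set s : ℝ → ℝ := fun t => √(-2 * t / κ) with hs_def
  have hs_pos : ∀ t < 0, 0 < s t := fun t ht => sqrt_pos.mpr (div_pos (by linarith) hκ)
  have hs : ∀ t < 0, HasDerivAt s (-(κ * s t)⁻¹) t := fun t ht =>
    hasDerivAt_sqrt_neg_two_mul_div hκ ht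
  have hf : ∀ t < 0, HasDerivAt (fun b => g (s b)) (g' (s t) * -(κ * s t)⁻¹) t := fun t ht =>
    (hg _ (hs_pos t ht)).comp t (hs t ht)
  have hf' : HasDerivAt (fun t => g' (s t) * -(κ * s t)⁻¹)
      (g'' * -(κ * s x)⁻¹ * -(κ * s x)⁻¹
        + g' (s x) * -(-(κ * -(κ * s x)⁻¹) / (κ * s x) ^ 2)) x :=
    (hg'.comp x (hs x hx)).mul (((hs x hx).const_mul κ).inv
      (mul_pos hκ (hs_pos x hx)).ne').neg
  have hderiv_eq : (fun a => deriv (fun b => g (s b)) a) =ᶠ[nhds x]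
      fun t => g' (s t) * -(κ * s t)⁻¹ := by
    filter_upwards [Iio_mem_nhds hx] with t ht using (hf t ht).deriv
  rw [hderiv_eq.deriv_eq, hf'.deriv, (hf x hx).deriv]
  have hsx : κ * s x ^ 2 = -2 * x := by
    rw [hs_def, sq_sqrt (div_pos (by linarith) hκ).le]; field_simp
  have hsx_ne := (hs_pos x hx).ne'
  clear_value s
  field_simp
  linear_combination (g'' * s x - g' (s x)) * hsx

theorem hasDerivAt_arctan_div_const {y : ℝ} (hy : y ≠ 0) (X : ℝ) :
    HasDerivAt (fun X => arctan (X / y)) (y / (X ^ 2 + y ^ 2)) X := by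
  have h : HasDerivAt (fun X => X / y) (1 / y) X := (hasDerivAt_id' X).div_const y
  convert h.arctan using 1
  field_simp
  ring

theorem hasDerivAt_arctan_const_div (X : ℝ) {y : ℝ} (hy : y ≠ 0) :
    HasDerivAt (fun y => arctan (X / y)) (-X / (X ^ 2 + y ^ 2)) y := by
  have h : HasDerivAt (fun y => X / y) (-X / y ^ 2) y := by
    simpa [div_eq_mul_inv] using (hasDerivAt_inv hy).const_mul X
  convert h.arctan using 1
  field_simp
  ring

theorem hasDerivAt_div_sq_add_sq_left {y : ℝ} (hy : y ≠ 0) (X : ℝ) :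
    HasDerivAt (fun X => y / (X ^ 2 + y ^ 2)) (-(2 * X * y) / (X ^ 2 + y ^ 2) ^ 2) X := by
  have hne : X ^ 2 + y ^ 2 ≠ 0 := by positivity
  have hden : HasDerivAt (fun X => X ^ 2 + y ^ 2) (2 * X) X := by
    simpa using (hasDerivAt_pow 2 X).add_const (y ^ 2)
  have h : HasDerivAt (fun X => y / (X ^ 2 + y ^ 2))
      ((0 * (X ^ 2 + y ^ 2) - y * (2 * X)) / (X ^ 2 + y ^ 2) ^ 2) X :=
    (hasDerivAt_const X y).div hden hne
  convert h using 1
  ring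

theorem deriv_deriv_arctan_const_div (X : ℝ) {y : ℝ} (hy : y ≠ 0) :
    deriv (fun c => deriv (fun d => arctan (X / d)) c) y = 2 * X * y / (X ^ 2 + y ^ 2) ^ 2 := by
  have hderiv_eq : (fun c => deriv (fun d => arctan (X / d)) c) =ᶠ[nhds y]
      fun c => -X / (X ^ 2 + c ^ 2) := by
    filter_upwards [isOpen_ne.mem_nhds hy] with c hc using (hasDerivAt_arctan_const_div X hc).deriv
  have hne : X ^ 2 + y ^ 2 ≠ 0 := by positivity
  have hden : HasDerivAt (fun c => X ^ 2 + c ^ 2) (2 * y) y := by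
    simpa using (hasDerivAt_pow 2 y).const_add (X ^ 2)
  have h : HasDerivAt (fun c => -X / (X ^ 2 + c ^ 2))
      ((0 * (X ^ 2 + y ^ 2) - -X * (2 * y)) / (X ^ 2 + y ^ 2) ^ 2) y :=
    (hasDerivAt_const y (-X)).div hden hne
  rw [hderiv_eq.deriv_eq, h.deriv]
  ring

/-- The inner-limit linear solution `u(x,y) = arctan(√(-2x/κ₀)/y)` satisfies the
degenerate PDE `2κ₀ x u_xx + κ₀ u_x - u_yy = 0` for `x < 0`, `y > 0`. -/
theorem arctan_solution_degenerate_pde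
    (κ₀ : ℝ) (hκ : 0 < κ₀) (u : ℝ → ℝ → ℝ)
    (hu : ∀ x y : ℝ, u x y = Real.arctan (Real.sqrt (-2 * x / κ₀) / y)) :
    ∀ x : ℝ, x < 0 → ∀ y : ℝ, 0 < y →
      2 * κ₀ * x * deriv (fun a : ℝ => deriv (fun b : ℝ => u b y) a) x
        + κ₀ * deriv (fun a : ℝ => u a y) x
        - deriv (fun c : ℝ => deriv (fun d : ℝ => u x d) c) y = 0 := by
  intro x hx y hy
  simp only [hu]
  rw [degenerate_operator_comp_sqrt hκ hx (fun X _ => hasDerivAt_arctan_div_const hy.ne' X)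
    (hasDerivAt_div_sq_add_sq_left hy.ne' _), deriv_deriv_arctan_const_div _ hy.ne']
  ring
end

section
/- Let κ₀ > 0 and let ρ, U, V : (0, ∞) × ℝ → ℝ be twice continuously differentiable functions of (ξ, θ) satisfying the first-order linearized system: (i) −ξ² ρ_ξ + κ₀ ξ U_ξ + κ₀(U + V_θ) = 0, (ii) κ₀ ρ_ξ − ξ U_ξ = 0, (iii) −ξ² V_ξ + κ₀ ρ_θ = 0. Then ρ satisfies the second-order degenerate wave equation ξ² ((1 − (ξ/κ₀)²) ρ_ξ)_ξ + ρ_{θθ} + ξ ρ_ξ = 0. -/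
/-!
Adding `κ₀` times (ii) to (i) eliminates `U_ξ`: `(κ₀² - ξ²) ρ_ξ + κ₀ U + κ₀ V_θ = 0` for `ξ > 0`.
Differentiate this in `ξ`, then substitute `U_ξ = κ₀ ρ_ξ / ξ` from (ii) and
`V_θξ = V_ξθ = κ₀ ρ_θθ / ξ²` from (iii), the first equality being Schwarz's theorem for the
`C²` function `V`. Multiplying by `ξ² / κ₀²` gives the wave equation.
-/

open Filter Topology

section PartialDerivatives

variable {G : Type*} [NormedAddCommGroup G] [NormedSpace ℝ G] {a b : ℝ}

theorem HasFDerivAt.hasDerivAt_fst {F : ℝ × ℝ → G} {F' : ℝ × ℝ →L[ℝ] G}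
    (h : HasFDerivAt F F' (a, b)) : HasDerivAt (fun x => F (x, b)) (F' (1, 0)) a :=
  h.comp_hasDerivAt a ((hasDerivAt_id a).prodMk (hasDerivAt_const a b))

theorem HasFDerivAt.hasDerivAt_snd {F : ℝ × ℝ → G} {F' : ℝ × ℝ →L[ℝ] G}
    (h : HasFDerivAt F F' (a, b)) : HasDerivAt (fun y => F (a, y)) (F' (0, 1)) b :=
  h.comp_hasDerivAt b ((hasDerivAt_const b a).prodMk (hasDerivAt_id b))

theorem ContDiffAt.hasDerivAt_fderiv_apply_fst {F : ℝ × ℝ → G} (hF : ContDiffAt ℝ 2 F (a, b))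
    (v : ℝ × ℝ) :
    HasDerivAt (fun x => fderiv ℝ F (x, b) v) (fderiv ℝ (fderiv ℝ F) (a, b) (1, 0) v) a :=
  (ContinuousLinearMap.apply ℝ G v).hasFDerivAt.comp_hasDerivAt a
    ((hF.fderiv_right le_rfl).differentiableAt one_ne_zero).hasFDerivAt.hasDerivAt_fst

theorem ContDiffAt.hasDerivAt_fderiv_apply_snd {F : ℝ × ℝ → G} (hF : ContDiffAt ℝ 2 F (a, b))
    (v : ℝ × ℝ) :
    HasDerivAt (fun y => fderiv ℝ F (a, y) v) (fderiv ℝ (fderiv ℝ F) (a, b) (0, 1) v) b :=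
  (ContinuousLinearMap.apply ℝ G v).hasFDerivAt.comp_hasDerivAt b
    ((hF.fderiv_right le_rfl).differentiableAt one_ne_zero).hasFDerivAt.hasDerivAt_snd

variable {f : ℝ → ℝ → G}

theorem ContDiffAt.eventually_differentiableAt_fst
    (hf : ContDiffAt ℝ 2 (Function.uncurry f) (a, b)) :
    ∀ᶠ x in 𝓝 a, DifferentiableAt ℝ (Function.uncurry f) (x, b) :=
  ((continuous_id.prodMk continuous_const).tendsto a).eventually
    ((hf.eventually (by simp)).mono fun _ h => h.differentiableAt two_ne_zero)

theorem ContDiffAt.eventually_differentiableAt_snd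
    (hf : ContDiffAt ℝ 2 (Function.uncurry f) (a, b)) :
    ∀ᶠ y in 𝓝 b, DifferentiableAt ℝ (Function.uncurry f) (a, y) :=
  ((continuous_const.prodMk continuous_id).tendsto b).eventually
    ((hf.eventually (by simp)).mono fun _ h => h.differentiableAt two_ne_zero)

theorem ContDiffAt.hasDerivAt_deriv_fst_fst (hf : ContDiffAt ℝ 2 (Function.uncurry f) (a, b)) :
    HasDerivAt (fun x => deriv (fun x' => f x' b) x)
      (fderiv ℝ (fderiv ℝ (Function.uncurry f)) (a, b) (1, 0) (1, 0)) a :=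
  (hf.hasDerivAt_fderiv_apply_fst (1, 0)).congr_of_eventuallyEq <|
    hf.eventually_differentiableAt_fst.mono fun _ h => h.hasFDerivAt.hasDerivAt_fst.deriv

theorem ContDiffAt.hasDerivAt_deriv_snd_fst (hf : ContDiffAt ℝ 2 (Function.uncurry f) (a, b)) :
    HasDerivAt (fun x => deriv (fun y => f x y) b)
      (fderiv ℝ (fderiv ℝ (Function.uncurry f)) (a, b) (1, 0) (0, 1)) a :=
  (hf.hasDerivAt_fderiv_apply_fst (0, 1)).congr_of_eventuallyEq <|
    hf.eventually_differentiableAt_fst.mono fun _ h => h.hasFDerivAt.hasDerivAt_snd.deriv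

theorem ContDiffAt.hasDerivAt_deriv_fst_snd (hf : ContDiffAt ℝ 2 (Function.uncurry f) (a, b)) :
    HasDerivAt (fun y => deriv (fun x => f x y) a)
      (fderiv ℝ (fderiv ℝ (Function.uncurry f)) (a, b) (1, 0) (0, 1)) b := by
  rw [hf.isSymmSndFDerivAt (by simp)]
  exact (hf.hasDerivAt_fderiv_apply_snd (1, 0)).congr_of_eventuallyEq <|
    hf.eventually_differentiableAt_snd.mono fun _ h => h.hasFDerivAt.hasDerivAt_fst.deriv

end PartialDerivatives

section LinearizedSystem

variable {κ₀ : ℝ} {ρ U V : ℝ → ℝ → ℝ} {ξ θ ρξξ Uξ Vξθ : ℝ}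

theorem radial_relation_deriv
    (h1 : ∀ ξ : ℝ, 0 < ξ → ∀ θ : ℝ,
      -ξ ^ 2 * deriv (fun x => ρ x θ) ξ + κ₀ * ξ * deriv (fun x => U x θ) ξ
        + κ₀ * (U ξ θ + deriv (fun y => V ξ y) θ) = 0)
    (h2 : ∀ ξ : ℝ, 0 < ξ → ∀ θ : ℝ,
      κ₀ * deriv (fun x => ρ x θ) ξ - ξ * deriv (fun x => U x θ) ξ = 0)
    (hξ : 0 < ξ) (hρ : HasDerivAt (fun x => deriv (fun x' => ρ x' θ) x) ρξξ ξ)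
    (hU : HasDerivAt (fun x => U x θ) Uξ ξ)
    (hV : HasDerivAt (fun x => deriv (fun y => V x y) θ) Vξθ ξ) :
    -(2 * ξ) * deriv (fun x => ρ x θ) ξ + (κ₀ ^ 2 - ξ ^ 2) * ρξξ + κ₀ * Uξ + κ₀ * Vξθ = 0 := by
  have hvanish : (fun x => (κ₀ ^ 2 - x ^ 2) * deriv (fun x' => ρ x' θ) x + κ₀ * U x θ
      + κ₀ * deriv (fun y => V x y) θ) =ᶠ[𝓝 ξ] fun _ => 0 := by
    filter_upwards [Ioi_mem_nhds hξ] with x hx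
    linear_combination h1 x hx θ + κ₀ * h2 x hx θ
  have hderiv := ((((hasDerivAt_pow 2 ξ).const_sub (κ₀ ^ 2)).mul hρ).add
    (hU.const_mul κ₀)).add (hV.const_mul κ₀)
  have hzero := hderiv.unique ((hasDerivAt_const ξ (0 : ℝ)).congr_of_eventuallyEq hvanish)
  norm_num at hzero
  linear_combination hzero

theorem hasDerivAt_deriv_snd_of_angular_equation (hκ : κ₀ ≠ 0)
    (h3 : ∀ θ : ℝ, -ξ ^ 2 * deriv (fun x => V x θ) ξ + κ₀ * deriv (fun y => ρ ξ y) θ = 0)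
    (hV : HasDerivAt (fun y => deriv (fun x => V x y) ξ) Vξθ θ) :
    HasDerivAt (fun y => deriv (fun y' => ρ ξ y') y) (ξ ^ 2 / κ₀ * Vξθ) θ := by
  have hρθ : (fun y => deriv (fun y' => ρ ξ y') y)
      = fun y => ξ ^ 2 / κ₀ * deriv (fun x => V x y) ξ := by
    funext y
    rw [div_mul_eq_mul_div, eq_div_iff hκ]
    linear_combination h3 y
  rw [hρθ]
  exact hV.const_mul _

end LinearizedSystem

/-- The first-order linearized self-similar Euler system implies the
second-order degenerate wave equation
`ξ²((1-(ξ/κ₀)²)ρ_ξ)_ξ + ρ_θθ + ξρ_ξ = 0` for the density perturbation. -/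
theorem linearized_system_implies_degenerate_wave_equation
    (κ₀ : ℝ) (hκ : 0 < κ₀) (ρ U V : ℝ → ℝ → ℝ)
    (hρ : ContDiffOn ℝ 2 (fun p : ℝ × ℝ => ρ p.1 p.2) (Set.Ioi (0 : ℝ) ×ˢ Set.univ))
    (hU : ContDiffOn ℝ 2 (fun p : ℝ × ℝ => U p.1 p.2) (Set.Ioi (0 : ℝ) ×ˢ Set.univ))
    (hV : ContDiffOn ℝ 2 (fun p : ℝ × ℝ => V p.1 p.2) (Set.Ioi (0 : ℝ) ×ˢ Set.univ))
    (h1 : ∀ ξ : ℝ, 0 < ξ → ∀ θ : ℝ,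
      -ξ ^ 2 * deriv (fun x => ρ x θ) ξ + κ₀ * ξ * deriv (fun x => U x θ) ξ
        + κ₀ * (U ξ θ + deriv (fun y => V ξ y) θ) = 0)
    (h2 : ∀ ξ : ℝ, 0 < ξ → ∀ θ : ℝ,
      κ₀ * deriv (fun x => ρ x θ) ξ - ξ * deriv (fun x => U x θ) ξ = 0)
    (h3 : ∀ ξ : ℝ, 0 < ξ → ∀ θ : ℝ,
      -ξ ^ 2 * deriv (fun x => V x θ) ξ + κ₀ * deriv (fun y => ρ ξ y) θ = 0) :
    ∀ ξ : ℝ, 0 < ξ → ∀ θ : ℝ,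
      ξ ^ 2 * deriv (fun x => (1 - (x / κ₀) ^ 2) * deriv (fun x' => ρ x' θ) x) ξ
        + deriv (fun y => deriv (fun y' => ρ ξ y') y) θ
        + ξ * deriv (fun x => ρ x θ) ξ = 0 := by
  intro ξ hξ θ
  have hnhds : Set.Ioi 0 ×ˢ Set.univ ∈ 𝓝 (ξ, θ) :=
    (isOpen_Ioi.prod isOpen_univ).mem_nhds ⟨hξ, trivial⟩
  have hρξξ := (hρ.contDiffAt hnhds).hasDerivAt_deriv_fst_fst
  have hVθξ := (hV.contDiffAt hnhds).hasDerivAt_deriv_snd_fst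
  have hVξθ := (hV.contDiffAt hnhds).hasDerivAt_deriv_fst_snd
  have hUξ : HasDerivAt (fun x => U x θ) (deriv (fun x => U x θ) ξ) ξ :=
    ((hU.contDiffAt hnhds).differentiableAt two_ne_zero).hasFDerivAt.hasDerivAt_fst
      |>.differentiableAt.hasDerivAt
  have hradial := radial_relation_deriv h1 h2 hξ hρξξ hUξ hVθξ
  have hρθθ := hasDerivAt_deriv_snd_of_angular_equation hκ.ne' (h3 ξ hξ) hVξθ
  have hcoef : HasDerivAt (fun x : ℝ => 1 - (x / κ₀) ^ 2) (-(2 * ξ / κ₀ ^ 2)) ξ := by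
    refine ((((hasDerivAt_id' ξ).div_const κ₀).fun_pow 2).const_sub 1).congr_deriv ?_
    norm_num
    ring
  rw [(hcoef.fun_mul hρξξ).deriv, hρθθ.deriv]
  field_simp
  linear_combination ξ ^ 2 * hradial + ξ * κ₀ * h2 ξ hξ θ
end

section
/- Let k < 0 and R > 0, and define g(r) = r^{−1/2} ( k r^{1/2} + sqrt(R − r + k² r) ) for r ∈ (0, R]. Then g(R) = 0 and the left-hand derivative of g at r = R equals 1/(2kR). Consequently, for the rarefaction-wave density profile ρ(r) = ρ₂ + ε² C ρ₀ g(r) with C < 0 and k = εC(γ+1)/(2(1−b̃)) matched continuously to ρ ≡ ρ₂ for r > R, the jump in the radial density gradient across the diffracted wavefront r = R is [ρ_r] = ε ρ₀ (1 − b̃)/((γ+1)R). -/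
/-!
At `r = R` the radicand is `k²R`, so `g(R) = k + |k|`, which vanishes for `k < 0`.
Differentiating `r^{-1/2}(k r^{1/2} + √(R - r + k² r))` by the product and chain rules
gives `-|k|/(2R) + (k² - 1)/(2|k|R) = -1/(2|k|R)` at `r = R`.
The gradient jump is then `ε²Cρ₀/(2kR)`, and substituting `k` cancels `εC`.
-/

noncomputable def rarefactionProfile (k R r : ℝ) : ℝ :=
  (√r)⁻¹ * (k * √r + √(R - r + k ^ 2 * r))

theorem sqrt_sq_mul_eq_abs_mul_sqrt (k R : ℝ) : √(k ^ 2 * R) = |k| * √R := by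
  rw [Real.sqrt_mul (sq_nonneg k), Real.sqrt_sq_eq_abs]

theorem rarefactionProfile_self {k : ℝ} (hk : k ≤ 0) (R : ℝ) :
    rarefactionProfile k R R = 0 := by
  rw [rarefactionProfile, sub_self, zero_add, sqrt_sq_mul_eq_abs_mul_sqrt, abs_of_nonpos hk]
  ring

theorem hasDerivAt_rarefactionProfile {k R : ℝ} (hk : k ≠ 0) (hR : 0 < R) :
    HasDerivAt (rarefactionProfile k R) (-1 / (2 * |k| * R)) R := by
  have hsR : √R ≠ 0 := (Real.sqrt_pos.2 hR).ne'
  have hsqrt : HasDerivAt (√·) (1 / (2 * √R)) R := Real.hasDerivAt_sqrt hR.ne'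
  have hradicand : HasDerivAt (fun r : ℝ => R - r + k ^ 2 * r) (-1 + k ^ 2) R :=
    ((hasDerivAt_id R).const_sub R).add ((hasDerivAt_id R).const_mul (k ^ 2)) |>.congr_deriv
      (by ring)
  have hradicand_pos : 0 < R - R + k ^ 2 * R := by
    rw [sub_self, zero_add]; positivity
  have hprod : HasDerivAt (rarefactionProfile k R)
      (-(1 / (2 * √R)) / √R ^ 2 * (k * √R + √(R - R + k ^ 2 * R))
        + (√R)⁻¹ * (k * (1 / (2 * √R)) + (-1 + k ^ 2) / (2 * √(R - R + k ^ 2 * R)))) R :=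
    (hsqrt.inv hsR).mul ((hsqrt.const_mul k).add (hradicand.sqrt hradicand_pos.ne'))
  refine hprod.congr_deriv ?_
  rw [sub_self, zero_add, sqrt_sq_mul_eq_abs_mul_sqrt, ← sq_abs k]
  have hsq : √R ^ 2 = R := Real.sq_sqrt hR.le
  have hk' : |k| ≠ 0 := abs_ne_zero.2 hk
  field_simp
  linear_combination hsq

theorem rarefaction_gradient_jump_general
    (k R ε C γ bt ρ₀ ρ₂ : ℝ)
    (hk : k < 0) (hR : 0 < R)
    (hkdef : k = ε * C * (γ + 1) / (2 * (1 - bt)))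
    (g : ℝ → ℝ)
    (hg : ∀ r : ℝ, g r = (Real.sqrt r)⁻¹
      * (k * Real.sqrt r + Real.sqrt (R - r + k ^ 2 * r))) :
    g R = 0 ∧
    HasDerivWithinAt g (1 / (2 * k * R)) (Set.Iio R) R ∧
    HasDerivWithinAt (fun r => ρ₂ + ε ^ 2 * C * ρ₀ * g r)
      (ε * ρ₀ * (1 - bt) / ((γ + 1) * R)) (Set.Iio R) R := by
  obtain rfl : g = rarefactionProfile k R := funext hg
  have hderiv : HasDerivWithinAt (rarefactionProfile k R) (1 / (2 * k * R)) (Set.Iio R) R := by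
    refine (hasDerivAt_rarefactionProfile hk.ne hR).hasDerivWithinAt.congr_deriv ?_
    rw [abs_of_neg hk]
    ring
  refine ⟨rarefactionProfile_self hk.le R, hderiv, ?_⟩
  have hfactors : ε * C * (γ + 1) / (2 * (1 - bt)) ≠ 0 := hkdef ▸ hk.ne
  simp only [div_ne_zero_iff, mul_ne_zero_iff] at hfactors
  obtain ⟨⟨⟨hε, hC⟩, hγ⟩, -, hbt⟩ := hfactors
  refine ((hderiv.const_mul (ε ^ 2 * C * ρ₀)).const_add ρ₂).congr_deriv ?_
  rw [hkdef]
  field_simp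

/-- Behaviour of the rarefaction profile `g(r) = r^{-1/2}(k r^{1/2} + √(R-r+k²r))`
at the diffracted wavefront `r = R`: `g(R) = 0`, the left derivative of `g` at `R`
is `1/(2kR)`, and the density `ρ = ρ₂ + ε²Cρ₀ g` has radial-gradient jump
`[ρ_r] = ερ₀(1-b̃)/((γ+1)R)` across `r = R`. -/
theorem rarefaction_gradient_jump
    (k R ε C γ bt ρ₀ ρ₂ : ℝ)
    (hk : k < 0) (hR : 0 < R) (hγ : 1 < γ) (hbt0 : 0 ≤ bt) (hbt1 : bt < 1)
    (hε : 0 < ε) (hC : C < 0)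
    (hkdef : k = ε * C * (γ + 1) / (2 * (1 - bt)))
    (g : ℝ → ℝ)
    (hg : ∀ r : ℝ, g r = (Real.sqrt r)⁻¹
      * (k * Real.sqrt r + Real.sqrt (R - r + k ^ 2 * r))) :
    g R = 0 ∧
    HasDerivWithinAt g (1 / (2 * k * R)) (Set.Iio R) R ∧
    HasDerivWithinAt (fun r => ρ₂ + ε ^ 2 * C * ρ₀ * g r)
      (ε * ρ₀ * (1 - bt) / ((γ + 1) * R)) (Set.Iio R) R :=
  rarefaction_gradient_jump_general k R ε C γ bt ρ₀ ρ₂ hk hR hkdef g hg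
end

section
/- Let κ₀ > 0, γ > 1, 0 ≤ b̃ < 1, and ϑ = (κ₀/2)(γ+1)/(1−b̃). Then the function U(r′, θ′) = θ′ · sqrt(r′), defined for r′ > 0, satisfies the mixed-type quasilinear PDE U_{θ′θ′} + 2κ₀(ϑU − r′)U_{r′r′} + 2κ₀ϑ(U_{r′})² − κ₀U_{r′} = 0 at every point with r′ > 0. Equivalently, the similarity ansatz U = θ′² f(r′/θ′²) with f(x) = √x yields an exact solution of the PDE. -/
open Real

theorem hasDerivAt_const_mul_sqrt (c : ℝ) {x : ℝ} (hx : 0 < x) :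
    HasDerivAt (fun t => c * √t) (c / (2 * √x)) x := by
  rw [← mul_one_div]; exact (hasDerivAt_sqrt hx.ne').const_mul c

theorem deriv_deriv_const_mul_sqrt (c : ℝ) {x : ℝ} (hx : 0 < x) :
    deriv (fun y => deriv (fun t => c * √t) y) x = -c / (4 * x * √x) := by
  have hderiv : (fun y => deriv (fun t => c * √t) y) =ᶠ[nhds x] fun y => c / 2 * (√y)⁻¹ := by
    filter_upwards [Ioi_mem_nhds hx] with y hy
    rw [(hasDerivAt_const_mul_sqrt c hy).deriv]
    ring
  have hsqrt : √x ≠ 0 := (sqrt_pos.2 hx).ne'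
  have hinv : HasDerivAt (fun y => (√y)⁻¹) (-(1 / (2 * √x)) / √x ^ 2) x :=
    (hasDerivAt_sqrt hx.ne').inv hsqrt
  rw [hderiv.deriv_eq, (hinv.const_mul (c / 2)).deriv, sq_sqrt hx.le]
  field_simp
  ring

theorem deriv_deriv_mul_const (c y : ℝ) :
    deriv (fun z => deriv (fun t => t * c) z) y = 0 := by
  simp only [deriv_mul_const_field', deriv_id'', one_mul, deriv_const]

theorem similarity_solution_mixed_type_pde_general
    (κ₀ ϑ : ℝ)
    (U : ℝ → ℝ → ℝ) (hU : ∀ r θ : ℝ, U r θ = θ * Real.sqrt r) :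
    ∀ r' : ℝ, 0 < r' → ∀ θ' : ℝ,
      deriv (fun y => deriv (fun y' => U r' y') y) θ'
        + 2 * κ₀ * (ϑ * U r' θ' - r')
          * deriv (fun x => deriv (fun x' => U x' θ') x) r'
        + 2 * κ₀ * ϑ * (deriv (fun x => U x θ') r') ^ 2
        - κ₀ * deriv (fun x => U x θ') r' = 0 := by
  intro r' hr θ'
  obtain rfl : U = fun r θ => θ * √r := funext₂ hU
  rw [deriv_deriv_mul_const, deriv_deriv_const_mul_sqrt θ' hr,
    (hasDerivAt_const_mul_sqrt θ' hr).deriv]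
  have hsqrt : √r' ≠ 0 := (sqrt_pos.2 hr).ne'
  -- the ϑ-terms cancel each other, and so do the remaining two
  field_simp
  linear_combination (-4 * κ₀ * ϑ * θ' ^ 2) * sq_sqrt hr.le

/-- The similarity function `U(r',θ') = θ'·√r'` is an exact solution of the
mixed-type quasilinear PDE
`U_θ'θ' + 2κ₀(ϑU - r')U_r'r' + 2κ₀ϑ(U_r')² - κ₀U_r' = 0` for `r' > 0`. -/
theorem similarity_solution_mixed_type_pde
    (κ₀ γ bt ϑ : ℝ)
    (hκ : 0 < κ₀) (hγ : 1 < γ) (hbt0 : 0 ≤ bt) (hbt1 : bt < 1)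
    (hϑ : ϑ = (κ₀ / 2) * (γ + 1) / (1 - bt))
    (U : ℝ → ℝ → ℝ) (hU : ∀ r θ : ℝ, U r θ = θ * Real.sqrt r) :
    ∀ r' : ℝ, 0 < r' → ∀ θ' : ℝ,
      deriv (fun y => deriv (fun y' => U r' y') y) θ'
        + 2 * κ₀ * (ϑ * U r' θ' - r')
          * deriv (fun x => deriv (fun x' => U x' θ') x) r'
        + 2 * κ₀ * ϑ * (deriv (fun x => U x θ') r') ^ 2
        - κ₀ * deriv (fun x => U x θ') r' = 0 :=
  similarity_solution_mixed_type_pde_general κ₀ ϑ U hU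
end
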